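/- A sequence of vertices P is a directed s-t path in G_φ if and only if there exist k ∈ {1,…,n} and ε : {1,…,n} → {true,false} such that P = (s, w₁¹, …, w_k¹, w_k², w_{k+1}², …, wₙ², t), where wᵢˡ = tᵢˡ if ε(i) = true and wᵢˡ = fᵢˡ if ε(i) = false. Moreover this correspondence is a bijection between {1,…,n} × {true,false}^{{1,…,n}} and the set of directed s-t paths of G_φ; in particular, every directed s-t path in G_φ contains exactly one bridge edge. -/

import Mathlib

/-- Vertices of the graph `G_φ`: source `s`, sink `t`, and for each variable index
`i ∈ {1,…,n}` the four vertices `tᵢ¹, tᵢ², fᵢ¹, fᵢ²`.  Here `Vtx.mid i second isTrue`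
is `tᵢ` if `isTrue = true`, `fᵢ` if `isTrue = false`; superscript `2` iff `second = true`. -/
inductive Vtx (n : ℕ) : Type where
  | s : Vtx n
  | t : Vtx n
  | mid (i : Fin n) (second : Bool) (isTrue : Bool) : Vtx n
deriving DecidableEq

/-- The directed edges of `G_φ`. -/
def GEdge (n : ℕ) : Vtx n → Vtx n → Prop :=
  fun a b =>
    match a, b with
    | .s, .mid i false _ => (i : ℕ) = 0
    | .mid i false _, .mid j false _ => (j : ℕ) = (i : ℕ) + 1
    | .mid i true _, .mid j true _ => (j : ℕ) = (i : ℕ) + 1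
    | .mid i false v, .mid j true w => j = i ∧ w = v
    | .mid i true _, .t => (i : ℕ) = n - 1
    | _, _ => False

/-- Whether `(a, b)` is a bridge edge, i.e. of the form `(tᵢ¹,tᵢ²)` or `(fᵢ¹,fᵢ²)`. -/
def isBridgeB (n : ℕ) : Vtx n → Vtx n → Bool
  | .mid i false v, .mid j true w => i == j && v == w
  | _, _ => false

/-- A directed `s`-`t` path in `G_φ`: consecutive pairs are edges, vertices are
pairwise distinct, the first vertex is `s` and the last is `t`. -/
def isSTPath (n : ℕ) (P : List (Vtx n)) : Prop :=
  P.Chain' (GEdge n) ∧ P.Nodup ∧ P.head? = some Vtx.s ∧ P.getLast? = some Vtx.t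

/-- The canonical `s`-`t` path determined by a bridge position `k` and a choice
`ε i ∈ {t, f}` for every index: `s, w₁¹, …, w_k¹, w_k², …, wₙ², t`. -/
def pathOf (n : ℕ) (k : Fin n) (ε : Fin n → Bool) : List (Vtx n) :=
  Vtx.s ::
    ((((List.finRange n).filter fun i => decide (i.val ≤ k.val)).map
        fun i => Vtx.mid i false (ε i)) ++
     (((List.finRange n).filter fun i => decide (k.val ≤ i.val)).map
        fun i => Vtx.mid i true (ε i)) ++
     [Vtx.t])

/-!
Give `s`, `wᵢ¹`, `wᵢ²`, `t` the levels `0`, `i + 1`, `i + 2`, `n + 2`. Every edge of `G_φ` raises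
the level, so a walk is automatically a path, and no edge leaves the second layer, so a walk
from `s` to `t` switches layers, i.e. uses a bridge, exactly once. Walks to `t` are classified by
induction on their length: from `wᵢ²` the only walk is `wᵢ², …, wₙ², t`, and from `wᵢ¹` it is
`wᵢ¹, …, w_k¹, w_k², …, wₙ², t` for some `k ≥ i`, the labels being free. The pair `(k, ε)` is
read off the vertex set of `pathOf n k ε`: `k` is the last index on the first layer, and `ε i`
is the label of any vertex of index `i`.
-/

namespace List

variable {α : Type*}

theorem IsChain.rel_of_mem_zip_tail {R : α → α → Prop} :
    ∀ {l : List α}, l.IsChain R → ∀ {q : α × α}, q ∈ l.zip l.tail → R q.1 q.2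
  | a :: b :: l, h, q, hq => by
    rcases mem_cons.1 hq with rfl | hq
    · exact (isChain_cons_cons.1 h).1
    · exact (isChain_cons_cons.1 h).2.rel_of_mem_zip_tail hq

theorem IsChain.nodup_of_lt {β : Type*} [Preorder β] {R : α → α → Prop} {f : α → β}
    {l : List α} (h : l.IsChain R) (hR : ∀ a b, R a b → f a < f b) : l.Nodup := by
  have hmap : (l.map f).IsChain (· < ·) := (isChain_map f).2 (h.imp hR)
  exact (isChain_iff_pairwise.1 hmap).nodup.of_map f

theorem IsChain.countP_zip_tail_eq_one {f : α → Bool} :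
    ∀ {a : α} {l : List α}, (a :: l).IsChain (fun x y => f x ≤ f y) → f a = false →
      (∀ b ∈ (a :: l).getLast?, f b = true) →
      ((a :: l).zip l).countP (fun q => !f q.1 && f q.2) = 1
  | a, [], _, ha, hlast => by simp_all
  | a, b :: l, h, ha, hlast => by
    rw [zip_cons_cons, countP_cons]
    cases hb : f b
    · rw [(isChain_cons_cons.1 h).2.countP_zip_tail_eq_one hb (by simpa using hlast)]
      simp
    · have hup : ∀ x ∈ b :: l, f x = true := by
        intro x hx
        rcases mem_cons.1 hx with rfl | hx
        · exact hb
        · have := (pairwise_cons.1 (isChain_iff_pairwise.1 (isChain_cons_cons.1 h).2)).1 x hx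
          exact Bool.le_iff_imp.1 (hb ▸ this) rfl
      rw [countP_eq_zero.2 fun q hq => by simp [hup q.1 (of_mem_zip hq).1]]
      simp [ha]

theorem mem_take_finRange {n j : ℕ} {i : Fin n} : i ∈ (finRange n).take j ↔ i.val < j := by
  simp [mem_take_iff_getElem, Fin.ext_iff]

theorem mem_drop_finRange {n j : ℕ} {i : Fin n} : i ∈ (finRange n).drop j ↔ j ≤ i.val := by
  simp only [mem_drop_iff_getElem, length_finRange, getElem_finRange, Fin.ext_iff, Fin.val_cast]
  exact ⟨fun ⟨m, _, hm⟩ => hm ▸ Nat.le_add_right j m, fun h => ⟨i - j, by omega, by omega⟩⟩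

theorem filter_finRange_le_val (n j : ℕ) :
    (finRange n).filter (fun i => decide (j ≤ i.val)) = (finRange n).drop j := by
  conv_lhs => rw [← take_append_drop j (finRange n)]
  rw [filter_append, filter_eq_nil_iff.2, filter_eq_self.2, nil_append]
  · exact fun i hi => by simpa using mem_drop_finRange.1 hi
  · exact fun i hi => by simpa using mem_take_finRange.1 hi

theorem filter_finRange_val_le (n k : ℕ) :
    (finRange n).filter (fun i => decide (i.val ≤ k)) = (finRange n).take (k + 1) := by
  conv_lhs => rw [← take_append_drop (k + 1) (finRange n)]
  rw [filter_append, filter_eq_self.2, filter_eq_nil_iff.2, append_nil]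
  · exact fun i hi => by simpa using mem_drop_finRange.1 hi
  · exact fun i hi => by simpa [Nat.lt_succ_iff] using mem_take_finRange.1 hi

end List

namespace Vtx

variable {n : ℕ}

def level : Vtx n → ℕ
  | s => 0
  | t => n + 2
  | mid i second _ => i + 1 + second.toNat

def isUpper : Vtx n → Bool
  | s => false
  | t => true
  | mid _ second _ => second

end Vtx

namespace GEdge

variable {n : ℕ} {a b : Vtx n}

theorem level_lt (h : GEdge n a b) : a.level < b.level := by
  rcases a with _ | _ | ⟨i, _ | _, v⟩ <;> rcases b with _ | _ | ⟨j, _ | _, w⟩ <;>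
    simp [GEdge, Vtx.level] at h ⊢ <;> omega

theorem isUpper_le (h : GEdge n a b) : a.isUpper ≤ b.isUpper := by
  rcases a with _ | _ | ⟨i, _ | _, v⟩ <;> rcases b with _ | _ | ⟨j, _ | _, w⟩ <;>
    simp [GEdge, Vtx.isUpper] at h ⊢

theorem isBridgeB_eq (h : GEdge n a b) : isBridgeB n a b = (!a.isUpper && b.isUpper) := by
  rcases a with _ | _ | ⟨i, _ | _, v⟩ <;> rcases b with _ | _ | ⟨j, _ | _, w⟩ <;>
    simp [GEdge, Vtx.isUpper, isBridgeB] at h ⊢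
  simp [h]

end GEdge

section Tails

variable {n : ℕ} (ε : Fin n → Bool)

-- `lowerTail ε k j` is the suffix of `pathOf n k ε` from `w_j¹` on (for `j ≤ k`), and
-- `upperTail ε j` its suffix from `w_j²` on (for `k ≤ j`).
def upperTail (j : ℕ) : List (Vtx n) :=
  ((List.finRange n).drop j).map (fun i => Vtx.mid i true (ε i)) ++ [Vtx.t]

def lowerTail (k : Fin n) (j : ℕ) : List (Vtx n) :=
  (((List.finRange n).take (k + 1)).drop j).map (fun i => Vtx.mid i false (ε i)) ++
    upperTail ε k

theorem pathOf_eq_cons_lowerTail (k : Fin n) : pathOf n k ε = Vtx.s :: lowerTail ε k 0 := by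
  rw [pathOf, List.filter_finRange_le_val, List.filter_finRange_val_le]
  simp [lowerTail, upperTail]

theorem upperTail_of_lt {j : ℕ} (h : j < n) :
    upperTail ε j = Vtx.mid ⟨j, h⟩ true (ε ⟨j, h⟩) :: upperTail ε (j + 1) := by
  rw [upperTail, List.drop_eq_getElem_cons (by simpa using h)]
  simp [upperTail]

theorem upperTail_of_le {j : ℕ} (h : n ≤ j) : upperTail ε j = [Vtx.t] := by
  simp [upperTail, List.drop_eq_nil_of_le, h]

theorem lowerTail_of_le {k : Fin n} {j : ℕ} (h : j ≤ k) :
    lowerTail ε k j =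
      Vtx.mid ⟨j, h.trans_lt k.isLt⟩ false (ε ⟨j, h.trans_lt k.isLt⟩) :: lowerTail ε k (j + 1) := by
  rw [lowerTail, List.drop_eq_getElem_cons (by simp; omega)]
  simp [lowerTail]

theorem lowerTail_succ_self (k : Fin n) : lowerTail ε k (k + 1) = upperTail ε k := by
  simp [lowerTail]

variable {ε}

theorem upperTail_update {i : Fin n} {j : ℕ} (h : i.val < j) (v : Bool) :
    upperTail (Function.update ε i v) j = upperTail ε j := by
  refine congrArg (· ++ _) (List.map_congr_left fun i' hi' => ?_)
  rw [Function.update_of_ne]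
  rintro rfl
  exact absurd (List.mem_drop_finRange.1 hi') (by omega)

theorem lowerTail_update {k i : Fin n} {j : ℕ} (hij : i.val < j) (hik : i < k) (v : Bool) :
    lowerTail (Function.update ε i v) k j = lowerTail ε k j := by
  refine congrArg₂ (· ++ ·) (List.map_congr_left fun i' hi' => ?_) (upperTail_update hik v)
  rw [Function.update_of_ne]
  rintro rfl
  rw [List.drop_take] at hi'
  exact absurd (List.mem_drop_finRange.1 (List.mem_of_mem_take hi')) (by omega)

end Tails

section Paths

variable {n : ℕ}

theorem isChain_cons_upperTail (ε : Fin n → Bool) (i : Fin n) (v : Bool) :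
    (Vtx.mid i true v :: upperTail ε (i + 1)).IsChain (GEdge n) := by
  by_cases h : i.val + 1 < n
  · rw [upperTail_of_lt ε h]
    exact List.IsChain.cons_cons rfl (isChain_cons_upperTail ε ⟨i + 1, h⟩ _)
  · rw [upperTail_of_le ε (by omega)]
    exact List.isChain_pair.2 (show i.val = n - 1 by omega)
termination_by n - i

theorem isChain_cons_lowerTail (ε : Fin n → Bool) {i k : Fin n} (hik : i ≤ k) :
    (Vtx.mid i false (ε i) :: lowerTail ε k (i + 1)).IsChain (GEdge n) := by
  rcases hik.lt_or_eq with hik | rfl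
  · rw [lowerTail_of_le ε (Nat.succ_le_of_lt hik)]
    exact List.IsChain.cons_cons rfl
      (isChain_cons_lowerTail ε (show (⟨i + 1, _⟩ : Fin n) ≤ k from Nat.succ_le_of_lt hik))
  · rw [lowerTail_succ_self, upperTail_of_lt ε i.isLt]
    exact List.IsChain.cons_cons ⟨rfl, rfl⟩ (isChain_cons_upperTail ε i _)
termination_by k.val - i.val

theorem exists_eq_upperTail : ∀ {i : Fin n} {v : Bool} {Q : List (Vtx n)},
    (Vtx.mid i true v :: Q).IsChain (GEdge n) → (Vtx.mid i true v :: Q).getLast? = some Vtx.t →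
    ∃ ε, Vtx.mid i true v :: Q = upperTail ε i
  | _, _, [], _, hlast => by simp at hlast
  | i, v, y :: Q, h, hlast => by
    obtain ⟨hedge, hchain⟩ := List.isChain_cons_cons.1 h
    rw [List.getLast?_cons_cons] at hlast
    rcases y with _ | _ | ⟨j, _ | _, w⟩ <;> simp only [GEdge] at hedge
    · obtain rfl : Q = [] := by
        rcases Q with _ | ⟨z, Q⟩
        · rfl
        · exact absurd (List.isChain_cons_cons.1 hchain).1 (by simp [GEdge])
      refine ⟨fun _ => v, ?_⟩
      rw [upperTail_of_lt _ i.isLt, upperTail_of_le _ (by omega)]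
    · obtain ⟨ε, hε⟩ := exists_eq_upperTail hchain hlast
      refine ⟨Function.update ε i v, ?_⟩
      rw [upperTail_of_lt _ i.isLt, upperTail_update (Nat.lt_succ_self i.val) v]
      simp [hε, hedge]

theorem exists_eq_lowerTail : ∀ {i : Fin n} {v : Bool} {Q : List (Vtx n)},
    (Vtx.mid i false v :: Q).IsChain (GEdge n) → (Vtx.mid i false v :: Q).getLast? = some Vtx.t →
    ∃ (k : Fin n) (ε : Fin n → Bool), i ≤ k ∧ Vtx.mid i false v :: Q = lowerTail ε k i
  | _, _, [], _, hlast => by simp at hlast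
  | i, v, y :: Q, h, hlast => by
    obtain ⟨hedge, hchain⟩ := List.isChain_cons_cons.1 h
    rw [List.getLast?_cons_cons] at hlast
    rcases y with _ | _ | ⟨j, _ | _, w⟩ <;> simp only [GEdge] at hedge
    · obtain ⟨k, ε, hjk, hε⟩ := exists_eq_lowerTail hchain hlast
      have hik : i < k := Fin.lt_def.2 (by have := Fin.le_def.1 hjk; omega)
      refine ⟨k, Function.update ε i v, hik.le, ?_⟩
      rw [lowerTail_of_le _ hik.le, lowerTail_update (Nat.lt_succ_self i.val) hik v]
      simp [hε, hedge]
    · obtain ⟨rfl, rfl⟩ := hedge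
      obtain ⟨ε, hε⟩ := exists_eq_upperTail hchain hlast
      have hw : ε j = w := by
        rw [upperTail_of_lt _ j.isLt, List.cons.injEq] at hε
        simpa using hε.1.symm
      refine ⟨j, ε, le_rfl, ?_⟩
      rw [lowerTail_of_le _ le_rfl, lowerTail_succ_self, ← hε]
      simp [hw]

end Paths

section Main

variable {n : ℕ}

theorem isSTPath_pathOf (k : Fin n) (ε : Fin n → Bool) : isSTPath n (pathOf n k ε) := by
  have hchain : (pathOf n k ε).IsChain (GEdge n) := by
    rw [pathOf_eq_cons_lowerTail, lowerTail_of_le ε (Nat.zero_le _)]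
    exact .cons_cons rfl
      (isChain_cons_lowerTail ε (show (⟨0, _⟩ : Fin n) ≤ k from Nat.zero_le _))
  refine ⟨hchain, hchain.nodup_of_lt fun _ _ => GEdge.level_lt, rfl, ?_⟩
  simp [pathOf, List.getLast?_cons, List.getLast?_append]

theorem mid_mem_pathOf {k i : Fin n} {ε : Fin n → Bool} {b v : Bool} :
    Vtx.mid i b v ∈ pathOf n k ε ↔ i ≤ k ∧ b = false ∧ ε i = v ∨ k ≤ i ∧ b = true ∧ ε i = v := by
  simp [pathOf]

theorem pathOf_injective :
    Function.Injective fun p : Fin n × (Fin n → Bool) => pathOf n p.1 p.2 := by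
  have bridge_le {k k' : Fin n} {ε ε' : Fin n → Bool} (h : pathOf n k ε = pathOf n k' ε') :
      k ≤ k' := by
    rcases mid_mem_pathOf.1 (h ▸ mid_mem_pathOf.2 (.inl ⟨le_rfl, rfl, rfl⟩)) with
      ⟨hk, -⟩ | ⟨-, hb, -⟩
    · exact hk
    · exact absurd hb Bool.false_ne_true
  rintro ⟨k, ε⟩ ⟨k', ε'⟩ h
  simp only at h
  obtain rfl := le_antisymm (bridge_le h) (bridge_le h.symm)
  refine Prod.ext rfl (funext fun i => ?_)
  obtain ⟨b, hb⟩ : ∃ b, Vtx.mid i b (ε i) ∈ pathOf n k ε :=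
    (le_total i k).elim (fun h => ⟨false, mid_mem_pathOf.2 (.inl ⟨h, rfl, rfl⟩)⟩)
      (fun h => ⟨true, mid_mem_pathOf.2 (.inr ⟨h, rfl, rfl⟩)⟩)
  rcases mid_mem_pathOf.1 (h ▸ hb : _ ∈ pathOf n k ε') with ⟨-, -, h⟩ | ⟨-, -, h⟩ <;> exact h.symm

theorem isSTPath.exists_eq_pathOf {P : List (Vtx n)} (hP : isSTPath n P) :
    ∃ k ε, P = pathOf n k ε := by
  obtain ⟨hchain, -, hhead, hlast⟩ := hP
  rcases P with _ | ⟨x, Q⟩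
  · simp at hhead
  obtain rfl : x = Vtx.s := by simpa using hhead
  rcases Q with _ | ⟨y, Q⟩
  · simp at hlast
  obtain ⟨hedge, htail⟩ := List.isChain_cons_cons.1 hchain
  rcases y with _ | _ | ⟨i, _ | _, v⟩ <;> simp only [GEdge] at hedge
  obtain ⟨k, ε, -, hε⟩ := exists_eq_lowerTail htail (by rwa [List.getLast?_cons_cons] at hlast)
  exact ⟨k, ε, by rw [pathOf_eq_cons_lowerTail, hε, hedge]⟩

theorem isSTPath.countP_isBridgeB_eq_one {P : List (Vtx n)} (hP : isSTPath n P) :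
    ((P.zip P.tail).countP fun q => isBridgeB n q.1 q.2) = 1 := by
  obtain ⟨hchain, -, hhead, hlast⟩ := hP
  rw [List.countP_congr fun q hq => by rw [(hchain.rel_of_mem_zip_tail hq).isBridgeB_eq]]
  rcases P with _ | ⟨x, Q⟩
  · simp at hhead
  obtain rfl : x = Vtx.s := by simpa using hhead
  exact (hchain.imp fun _ _ => GEdge.isUpper_le).countP_zip_tail_eq_one rfl
    (by simp [hlast, Vtx.isUpper])

end Main

theorem stmt5_general (n : ℕ) :
    (∀ P : List (Vtx n), isSTPath n P ↔ ∃ (k : Fin n) (ε : Fin n → Bool), P = pathOf n k ε) ∧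
    (Function.Injective fun p : Fin n × (Fin n → Bool) => pathOf n p.1 p.2) ∧
    (∀ P : List (Vtx n), isSTPath n P →
      ((P.zip P.tail).countP fun q => isBridgeB n q.1 q.2) = 1) :=
  ⟨fun _ => ⟨isSTPath.exists_eq_pathOf, fun ⟨k, ε, hP⟩ => hP ▸ isSTPath_pathOf k ε⟩,
    pathOf_injective, fun _ hP => hP.countP_isBridgeB_eq_one⟩

/-- A sequence of vertices is a directed `s`-`t` path in `G_φ` iff it equals
`pathOf n k ε` for some bridge position `k ∈ {1,…,n}` and some `ε : {1,…,n} → {t,f}`;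
this correspondence is a bijection (the map `(k,ε) ↦ pathOf n k ε` is injective and its
range is exactly the set of directed `s`-`t` paths); in particular every directed
`s`-`t` path contains exactly one bridge edge. -/
theorem stmt5 (n : ℕ) (hn : 1 ≤ n) :
    (∀ P : List (Vtx n), isSTPath n P ↔ ∃ (k : Fin n) (ε : Fin n → Bool), P = pathOf n k ε) ∧
    (Function.Injective fun p : Fin n × (Fin n → Bool) => pathOf n p.1 p.2) ∧
    (∀ P : List (Vtx n), isSTPath n P →
      ((P.zip P.tail).countP fun q => isBridgeB n q.1 q.2) = 1) :=
  stmt5_general n
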